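/- Let R ⊆ S be a finite normalizing extension of K-algebras. If every essential extension of a locally finite left R-module is locally finite, then every finitely generated essential extension of a finite dimensional left S-module is finite dimensional over K. -/

import Mathlib

set_option synthInstance.maxHeartbeats 1000000
set_option maxHeartbeats 1000000
universe v

/-- A submodule is essential if it meets every nonzero submodule nontrivially. -/
def EssSub {A M : Type*} [Ring A] [AddCommGroup M] [Module A M]
    (N : Submodule A M) : Prop :=
  ∀ P : Submodule A M, P ⊓ N = ⊥ → P = ⊥

/-- A module is locally finite if every cyclic `A`-submodule is
finite dimensional over the base field `K`. -/
def LocFin (K A M : Type*) [Field K] [Ring A] [Algebra K A]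
    [AddCommGroup M] [Module A M] [Module K M] [IsScalarTower K A M] : Prop :=
  ∀ m : M, FiniteDimensional K ((Submodule.span A {m}).restrictScalars K)

/-!
Choose an `R`-submodule `C` of `M` maximal with `C ∩ V = 0`. The image of `V` in `M / C` is then
an essential `R`-submodule that is finite dimensional, so by hypothesis `M / C` is locally finite;
as `S` is a finitely generated `R`-module, so are `M` and `M / C`, whence `M / C` is finite
dimensional. Finally `m ↦ (xᵢ m + C)ᵢ` embeds `M` into `(M / C)ⁿ`: if every `xᵢ m` lies in `C`
then so does `S m`, and the `S`-submodule `S m` meets `V` trivially, hence vanishes.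
-/

theorem exists_maximal_disjoint {α : Type*} [CompleteLattice α] [IsCompactlyGenerated α]
    (a : α) : ∃ c, Maximal (Disjoint · a) c := by
  obtain ⟨c, -, hc⟩ := zorn_le_nonempty₀ {c | Disjoint c a}
    (fun _ hcs hchain _ _ ↦ ⟨_, (hchain.directedOn.disjoint_sSup_left).2 hcs,
      fun _ ↦ le_sSup⟩) ⊥ disjoint_bot_left
  exact ⟨c, hc⟩

section LocallyFinite

variable {K A Q : Type*} [Field K] [Ring A] [Algebra K A]
    [AddCommGroup Q] [Module A Q] [Module K Q] [IsScalarTower K A Q]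

theorem LocFin.of_finiteDimensional [FiniteDimensional K Q] : LocFin K A Q :=
  fun _ ↦ inferInstance

theorem LocFin.finiteDimensional_span_finset (h : LocFin K A Q) (G : Finset Q) :
    FiniteDimensional K ((Submodule.span A (G : Set Q)).restrictScalars K) := by
  classical
  induction G using Finset.induction with
  | empty =>
    rw [Finset.coe_empty, Submodule.span_empty, Submodule.restrictScalars_bot]
    infer_instance
  | insert a G _ ih =>
    rw [Finset.coe_insert, Submodule.span_insert, Submodule.restrictScalars_sup]
    have := h a
    exact Submodule.finiteDimensional_sup _ _

theorem LocFin.finiteDimensional [Module.Finite A Q] (h : LocFin K A Q) :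
    FiniteDimensional K Q := by
  obtain ⟨G, hG⟩ := Module.Finite.fg_top (R := A) (M := Q)
  have := h.finiteDimensional_span_finset G
  rw [hG, Submodule.restrictScalars_top] at this
  exact Submodule.topEquiv.finiteDimensional

end LocallyFinite

theorem EssSub.map_mkQ_of_maximal {A M : Type*} [Ring A] [AddCommGroup M] [Module A M]
    {N C : Submodule A M} (hC : Maximal (Disjoint · N) C) : EssSub (N.map C.mkQ) := by
  intro P hP
  have hdisj : Disjoint (P.comap C.mkQ) N := by
    rw [disjoint_iff, eq_bot_iff]
    rintro m ⟨hmP, hmN⟩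
    have : C.mkQ m ∈ P ⊓ N.map C.mkQ := ⟨hmP, Submodule.mem_map_of_mem hmN⟩
    rw [hP, Submodule.mem_bot, Submodule.mkQ_apply, Submodule.Quotient.mk_eq_zero] at this
    exact hC.1.le_bot ⟨this, hmN⟩
  have hcomap : P.comap C.mkQ = C :=
    (hC.eq_of_le hdisj fun c hc ↦ by simp [(Submodule.Quotient.mk_eq_zero C).2 hc]).symm
  rw [← Submodule.map_comap_eq_of_surjective C.mkQ_surjective P, hcomap, Submodule.mkQ_map_self]

section SpanGenerators

variable {R S M : Type*} [Ring R] [Ring S] [Module R S] [AddCommGroup M] [Module R M]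
  [Module S M] [IsScalarTower R S M] {ι : Type*} {x : ι → S}

theorem smul_mem_of_forall_smul_mem (hx : Submodule.span R (Set.range x) = ⊤)
    {C : Submodule R M} {m : M} (hm : ∀ i, x i • m ∈ C) (s : S) : s • m ∈ C := by
  have : Submodule.span R (Set.range x) ≤
      C.comap ((LinearMap.toSpanSingleton S M m).restrictScalars R) :=
    Submodule.span_le.2 (Set.range_subset_iff.2 hm)
  exact this (hx ▸ Submodule.mem_top)

theorem eq_zero_of_forall_smul_mem (hx : Submodule.span R (Set.range x) = ⊤)
    {V : Submodule S M} (hV : EssSub V) {C : Submodule R M}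
    (hC : Disjoint C (V.restrictScalars R)) {m : M} (hm : ∀ i, x i • m ∈ C) : m = 0 := by
  have : Submodule.span S {m} = ⊥ := by
    refine hV _ (eq_bot_iff.2 ?_)
    rintro _ ⟨hy, hyV⟩
    obtain ⟨s, rfl⟩ := Submodule.mem_span_singleton.1 hy
    exact hC.le_bot ⟨smul_mem_of_forall_smul_mem hx hm s, hyV⟩
  exact Submodule.span_singleton_eq_bot.1 this

end SpanGenerators

theorem stmt10_general (K S : Type*) [Field K] [Ring S] [Algebra K S]
    (R : Subalgebra K S) {n : ℕ} (x : Fin n → S)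
    (hgen : Submodule.span R (Set.range x) = (⊤ : Submodule R S))
    (hR : ∀ (M : Type v) [AddCommGroup M] [Module R M] [Module K M] [IsScalarTower K R M]
      (N : Submodule R M), EssSub N → LocFin K R N → LocFin K R M) :
    ∀ (M : Type v) [AddCommGroup M] [Module S M] [Module K M] [IsScalarTower K S M],
      Module.Finite S M →
      ∀ V : Submodule S M, EssSub V → FiniteDimensional K (V.restrictScalars K) →
        FiniteDimensional K M := by
  intro M _ _ _ _ _ V hV hVfd
  obtain ⟨C, hC⟩ := exists_maximal_disjoint (V.restrictScalars R)
  have : Module.Finite R S := ⟨Submodule.fg_def.2 ⟨_, Set.finite_range x, hgen⟩⟩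
  have : Module.Finite R M := .trans S M
  -- `hVfd` lives on the `K`-submodule structure of `V`, so instance search does not find it here.
  have : FiniteDimensional K ((V.restrictScalars R).map C.mkQ) :=
    Module.Finite.of_surjective (M := V.restrictScalars K) (hM := hVfd)
      ((C.mkQ.submoduleMap (V.restrictScalars R)).restrictScalars K)
      (C.mkQ.submoduleMap_surjective _)
  have : FiniteDimensional K (M ⧸ C) :=
    (hR _ _ (EssSub.map_mkQ_of_maximal hC) LocFin.of_finiteDimensional).finiteDimensional
  let Φ : M →ₗ[K] Fin n → M ⧸ C :=
    LinearMap.pi fun i ↦ C.mkQ.restrictScalars K ∘ₗ DistribSMul.toLinearMap K M (x i)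
  refine Module.Finite.of_injective Φ ((injective_iff_map_eq_zero Φ).2 fun m hm ↦ ?_)
  exact eq_zero_of_forall_smul_mem hgen hV hC.1
    fun i ↦ (Submodule.Quotient.mk_eq_zero C).1 (congrFun hm i)

theorem stmt10 (K S : Type*) [Field K] [Ring S] [Algebra K S]
    (R : Subalgebra K S) {n : ℕ} (x : Fin n → S)
    (hgen : Submodule.span R (Set.range x) = (⊤ : Submodule R S))
    (hnormal : ∀ i : Fin n,
      (fun r => r * x i) '' (R : Set S) = (fun r => x i * r) '' (R : Set S))
    (hR : ∀ (M : Type v) [AddCommGroup M] [Module R M] [Module K M] [IsScalarTower K R M]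
      (N : Submodule R M), EssSub N → LocFin K R N → LocFin K R M) :
    ∀ (M : Type v) [AddCommGroup M] [Module S M] [Module K M] [IsScalarTower K S M],
      Module.Finite S M →
      ∀ V : Submodule S M, EssSub V → FiniteDimensional K (V.restrictScalars K) →
        FiniteDimensional K M :=
  stmt10_general K S R x hgen hR
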